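/- arXiv:2103.01276 — 4 statements merged into one kernel-verified Lean document; each statement's English description precedes it below -/
import Mathlib

section
/- Let $H$ be a finite class of unilabel predictors $h:\mathbb{R}^d\to[k]$, $S$ a finite training set, $\delta\geq 0$, $p\geq 1$, and define the robust loss $\ell_\delta(h;x,y,y') = \mathbb{1}[\exists z\in B_p(\delta): h(x+z)=y'] - \mathbb{1}[\forall z\in B_p(\delta): h(x+z)=y]$. Suppose for some $\gamma>0$ that for every probability distribution $D$ on $\breve S = \{(x_i,y'):i\in[m], y'\neq y_i\}$ there exists $h\in H$ with $\mathbb{E}_{(x_i,y')\sim D}[\ell_\delta(h;x_i,y_i,y')]\leq -\gamma$. Then there exists a probability distribution $Q$ over $H$ such that for all $(x_i,y_i)\in S$ and all $z\in B_p(\delta)$, we have $\Pr_{h\sim Q}[h(x_i+z)=y_i] > \Pr_{h\sim Q}[h(x_i+z)=y']$ for every $y'\neq y_i$; i.e., the weighted-plurality-vote classifier $h_Q^{\mathrm{am}}(x_i+z)=y_i$ for all perturbations $z\in B_p(\delta)$. -/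
/-! Von Neumann's minimax theorem, applied to the zero-sum game whose rows are the hypotheses,
whose columns are the pairs `(xᵢ, y')` with `y' ≠ yᵢ`, and whose payoff is the robust loss `ℓ_δ`.
Weak learnability says that every mixed column strategy is answered by a pure row with payoff
`≤ -γ`; by minimax there is a mixed row strategy `Q` with payoff `≤ -γ < 0` against every column.
Since `ℓ_δ(h; xᵢ, yᵢ, y')` dominates `𝟙[h(xᵢ + z) = y'] - 𝟙[h(xᵢ + z) = yᵢ]` for each single
perturbation `z ∈ B_p(δ)`, the `Q`-weighted vote for `yᵢ` beats the vote for `y'` at every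
perturbed point. -/

open scoped Classical

def Bp (d : ℕ) (p δ : ℝ) : Set (Fin d → ℝ) := {z | (∑ i, |z i| ^ p) ^ (1 / p) ≤ δ}

open Matrix

theorem Matrix.exists_mem_stdSimplex_forall_vecMul_le {ι R : Type*} [Fintype ι]
    [Nonempty ι] [Fintype R] (V : Matrix ι R ℝ) (c : ℝ)
    (hV : ∀ D ∈ stdSimplex ℝ R, ∃ j, (V *ᵥ D) j ≤ c) :
    ∃ Q ∈ stdSimplex ℝ ι, ∀ r, (Q ᵥ* V) r ≤ c := by
  obtain ⟨j₀⟩ := ‹Nonempty ι›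
  cases isEmpty_or_nonempty R
  · exact ⟨Pi.single j₀ 1, single_mem_stdSimplex ℝ j₀, isEmptyElim⟩
  have hX := convex_stdSimplex ℝ ι
  have hY := convex_stdSimplex ℝ R
  let payoff : (ι → ℝ) → (R → ℝ) → ℝ := fun Q D => Q ⬝ᵥ V *ᵥ D
  let linLeft (D : R → ℝ) : (ι → ℝ) →ₗ[ℝ] ℝ := (dotProductBilin ℝ ℝ).flip (V *ᵥ D)
  let linRight (Q : ι → ℝ) : (R → ℝ) →ₗ[ℝ] ℝ := dotProductBilin ℝ ℝ (Q ᵥ* V)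
  have hLeft (D : R → ℝ) : ⇑(linLeft D) = fun Q => payoff Q D := rfl
  have hRight (Q : ι → ℝ) : ⇑(linRight Q) = fun D => payoff Q D := by
    funext D; exact (dotProduct_mulVec Q V D).symm
  obtain ⟨Q, hQ, D, hD, hsaddle⟩ := Sion.exists_isSaddlePointOn (f := payoff)
    ⟨_, single_mem_stdSimplex ℝ j₀⟩ hX (isCompact_stdSimplex ℝ ι)
    (fun D _ => hLeft D ▸
      (linLeft D).continuous_of_finiteDimensional.continuousOn.lowerSemicontinuousOn)
    (fun D _ => hLeft D ▸ ((linLeft D).convexOn hX).quasiconvexOn)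
    hY ⟨_, single_mem_stdSimplex ℝ (Classical.arbitrary R)⟩ (isCompact_stdSimplex ℝ R)
    (fun Q _ => hRight Q ▸
      (linRight Q).continuous_of_finiteDimensional.continuousOn.upperSemicontinuousOn)
    (fun Q _ => hRight Q ▸ ((linRight Q).concaveOn hY).quasiconcaveOn)
  obtain ⟨j, hj⟩ := hV D hD
  refine ⟨Q, hQ, fun r => ?_⟩
  calc (Q ᵥ* V) r = payoff Q (Pi.single r 1) := by simp [payoff, dotProduct_mulVec]
    _ ≤ payoff (Pi.single j 1) D :=
      hsaddle _ (single_mem_stdSimplex ℝ j) _ (single_mem_stdSimplex ℝ r)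
    _ = (V *ᵥ D) j := by simp [payoff]
    _ ≤ c := hj

theorem Fintype.sum_sum_dite_mul_eq_sum_subtype {α β : Type*} [Fintype α] [Fintype β]
    (p : α × β → Prop) [DecidablePred p] (D : Subtype p → ℝ) (g : α × β → ℝ) :
    ∑ a, ∑ b, (if hp : p (a, b) then D ⟨(a, b), hp⟩ else 0) * g (a, b) =
      ∑ r : Subtype p, D r * g r := by
  rw [← Fintype.sum_prod_type'
      (f := fun a b => (if hp : p (a, b) then D ⟨(a, b), hp⟩ else 0) * g (a, b)),
    ← Fintype.sum_subtype_add_sum_subtype p]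
  simp only [Prod.mk.eta, Subtype.prop, dif_pos, Subtype.coe_eta, add_eq_left]
  exact Finset.sum_eq_zero fun r _ => by rw [dif_neg r.2, zero_mul]

section RobustLoss

variable {E Y : Type*} [Add E]

/-- The robust loss `ℓ_δ(g; x, y, y')` of the paper, for the perturbation set `B`. -/
noncomputable def robustLoss (B : Set E) (g : E → Y) (x : E) (y y' : Y) : ℝ :=
  (if ∃ z ∈ B, g (x + z) = y' then 1 else 0) - (if ∀ z ∈ B, g (x + z) = y then 1 else 0)

theorem sub_le_robustLoss [DecidableEq Y] {B : Set E} {z : E} (hz : z ∈ B) (g : E → Y)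
    (x : E) (y y' : Y) :
    (if g (x + z) = y' then (1 : ℝ) else 0) - (if g (x + z) = y then 1 else 0) ≤
      robustLoss B g x y y' := by
  unfold robustLoss
  split_ifs <;> grind

end RobustLoss

theorem robust_boosting_general
    (d k m : ℕ)
    (p δ : ℝ)
    (ι : Type) [Fintype ι] [Nonempty ι]
    (h : ι → (Fin d → ℝ) → Fin k)
    (x : Fin m → Fin d → ℝ) (ylab : Fin m → Fin k)
    (γ : ℝ) (hγ : 0 < γ)
    -- (γ, δ)-robust weak learning: for every distribution D on S̆ there is h ∈ H with errδ(h, D) ≤ -γ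
    (hweak : ∀ D : Fin m → Fin k → ℝ,
      (∀ i y', 0 ≤ D i y') → (∀ i, D i (ylab i) = 0) → (∑ i, ∑ y', D i y' = 1) →
      ∃ j : ι,
        (∑ i, ∑ y', D i y' *
          ((if (∃ z ∈ Bp d p δ, h j (x i + z) = y') then (1:ℝ) else 0)
            - (if (∀ z ∈ Bp d p δ, h j (x i + z) = ylab i) then (1:ℝ) else 0)))
          ≤ -γ) :
    -- conclusion: a distribution Q over H whose weighted-plurality vote is robustly correct on S
    ∃ Q : ι → ℝ, (∀ j, 0 ≤ Q j) ∧ (∑ j, Q j = 1) ∧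
      ∀ i : Fin m, ∀ z ∈ Bp d p δ, ∀ y' : Fin k, y' ≠ ylab i →
        (∑ j, Q j * (if h j (x i + z) = y' then (1:ℝ) else 0)) <
        (∑ j, Q j * (if h j (x i + z) = ylab i then (1:ℝ) else 0)) := by
  let V : Matrix ι {r : Fin m × Fin k // r.2 ≠ ylab r.1} ℝ :=
    fun j r => robustLoss (Bp d p δ) (h j) (x r.1.1) (ylab r.1.1) r.1.2
  obtain ⟨Q, ⟨hQ₀, hQ₁⟩, hQV⟩ :=
      V.exists_mem_stdSimplex_forall_vecMul_le (-γ) fun D ⟨hD₀, hD₁⟩ => by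
    let D' : Fin m → Fin k → ℝ := fun i y => if hy : y ≠ ylab i then D ⟨(i, y), hy⟩ else 0
    have hsum := Fintype.sum_sum_dite_mul_eq_sum_subtype (fun r => r.2 ≠ ylab r.1) D
    obtain ⟨j, hj⟩ := hweak D' (fun i y => by dsimp only [D']; split_ifs <;> simp [hD₀])
      (fun i => dif_neg (not_not.2 rfl))
      (by simpa only [Pi.one_apply, mul_one, hD₁] using hsum 1)
    refine ⟨j, ?_⟩
    calc (V *ᵥ D) j = ∑ r, D r * V j r := by simp only [mulVec, dotProduct, mul_comm]
      _ = _ := (hsum fun r => robustLoss (Bp d p δ) (h j) (x r.1) (ylab r.1) r.2).symm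
      _ ≤ -γ := hj
  refine ⟨Q, hQ₀, hQ₁, fun i z hz y' hy' => ?_⟩
  have hmargin : ∑ j, Q j * ((if h j (x i + z) = y' then (1 : ℝ) else 0) -
      (if h j (x i + z) = ylab i then 1 else 0)) ≤ (Q ᵥ* V) ⟨(i, y'), hy'⟩ :=
    Finset.sum_le_sum fun j _ => mul_le_mul_of_nonneg_left (sub_le_robustLoss hz ..) (hQ₀ j)
  simp only [mul_sub, Finset.sum_sub_distrib] at hmargin
  linarith [hQV ⟨(i, y'), hy'⟩]

/-- robust multiclass boosting. `h j : ℝ^d → [k]` are unilabel predictors. -/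
theorem robust_boosting
    (d k m : ℕ) (hk : 2 ≤ k) (hm : 1 ≤ m)
    (p δ : ℝ) (hp : 1 ≤ p) (hδ : 0 ≤ δ)
    (ι : Type) [Fintype ι] [Nonempty ι]
    (h : ι → (Fin d → ℝ) → Fin k)
    (x : Fin m → Fin d → ℝ) (ylab : Fin m → Fin k)
    (γ : ℝ) (hγ : 0 < γ)
    -- (γ, δ)-robust weak learning: for every distribution D on S̆ there is h ∈ H with errδ(h, D) ≤ -γ
    (hweak : ∀ D : Fin m → Fin k → ℝ,
      (∀ i y', 0 ≤ D i y') → (∀ i, D i (ylab i) = 0) → (∑ i, ∑ y', D i y' = 1) →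
      ∃ j : ι,
        (∑ i, ∑ y', D i y' *
          ((if (∃ z ∈ Bp d p δ, h j (x i + z) = y') then (1:ℝ) else 0)
            - (if (∀ z ∈ Bp d p δ, h j (x i + z) = ylab i) then (1:ℝ) else 0)))
          ≤ -γ) :
    -- conclusion: a distribution Q over H whose weighted-plurality vote is robustly correct on S
    ∃ Q : ι → ℝ, (∀ j, 0 ≤ Q j) ∧ (∑ j, Q j = 1) ∧
      ∀ i : Fin m, ∀ z ∈ Bp d p δ, ∀ y' : Fin k, y' ≠ ylab i →
        (∑ j, Q j * (if h j (x i + z) = y' then (1:ℝ) else 0)) <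
        (∑ j, Q j * (if h j (x i + z) = ylab i then (1:ℝ) else 0)) :=
  robust_boosting_general d k m p δ ι h x ylab γ hγ hweak
end

section
/- Let $H$ be a finite class of unilabel predictors, $S$ a finite training set, $\delta\geq 0$, $\gamma>0$. Suppose for every probability distribution $D$ over $S$ there exists $h\in H$ with $\mathrm{err}^{\mathrm{ova}}_\delta(h,D) = \mathbb{E}_{(x,y)\sim D}[2\,\mathbb{1}[\exists z\in B_p(\delta):h(x+z)\neq y]-1] \leq -\gamma$. Then there exists a probability distribution $Q$ over $H$ such that for all $(x,y)\in S$ and all $z\in B_p(\delta)$, $\Pr_{h\sim Q}[h(x+z)=y]\geq\frac{1+\gamma}{2}$. -/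
open scoped Classical

/-!
Let `A i j ∈ {0, 1}` record whether hypothesis `j` is correct on every perturbation `x i + z`,
`z` in the ball. Since the robust one-vs-all error of `j` under `D` is `1 - 2 (D ᵥ* A) j`, the
weak-learning hypothesis says that against every distribution `D` on the sample some pure
strategy `j` earns `(D ᵥ* A) j ≥ (1 + γ) / 2`. By von Neumann's minimax theorem (a special case
of Sion's) a single mixed strategy `Q` then earns `(A *ᵥ Q) i ≥ (1 + γ) / 2` at every sample
point `i`, and robust correctness at `x i` bounds correctness at each `x i + z` from below.
-/

open Matrix

section Minimax

variable {α ι : Type*} [Fintype α] [Fintype ι]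

theorem Matrix.exists_isSaddlePointOn_stdSimplex [Nonempty α] [Nonempty ι] (A : Matrix α ι ℝ) :
    ∃ D ∈ stdSimplex ℝ α, ∃ Q ∈ stdSimplex ℝ ι,
      IsSaddlePointOn (stdSimplex ℝ α) (stdSimplex ℝ ι) (fun D Q => D ⬝ᵥ (A *ᵥ Q)) D Q := by
  have hcont_left (Q : ι → ℝ) : Continuous fun D : α → ℝ => D ⬝ᵥ (A *ᵥ Q) := by fun_prop
  have hcont_right (D : α → ℝ) : Continuous fun Q : ι → ℝ => D ⬝ᵥ (A *ᵥ Q) := by fun_prop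
  have hlin_left (Q : ι → ℝ) :
      (fun D : α → ℝ => D ⬝ᵥ (A *ᵥ Q)) = dotProductBilin ℝ ℝ (A *ᵥ Q) := by
    ext D; simp [dotProduct_comm]
  have hlin_right (D : α → ℝ) :
      (fun Q : ι → ℝ => D ⬝ᵥ (A *ᵥ Q)) = dotProductBilin ℝ ℝ (D ᵥ* A) := by
    ext Q; simp [dotProduct_mulVec]
  refine Sion.exists_isSaddlePointOn (isPathConnected_stdSimplex α).nonempty
    (convex_stdSimplex ℝ α) (isCompact_stdSimplex ℝ α)
    (fun Q _ => (hcont_left Q).lowerSemicontinuous.lowerSemicontinuousOn _) (fun Q _ => ?_)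
    (convex_stdSimplex ℝ ι) (isPathConnected_stdSimplex ι).nonempty (isCompact_stdSimplex ℝ ι)
    (fun D _ => (hcont_right D).upperSemicontinuous.upperSemicontinuousOn _) (fun D _ => ?_)
  · rw [hlin_left]
    exact ((dotProductBilin ℝ ℝ (A *ᵥ Q)).convexOn (convex_stdSimplex ℝ α)).quasiconvexOn
  · rw [hlin_right]
    exact ((dotProductBilin ℝ ℝ (D ᵥ* A)).concaveOn (convex_stdSimplex ℝ ι)).quasiconcaveOn

theorem Matrix.exists_mem_stdSimplex_le_mulVec [Nonempty ι] (A : Matrix α ι ℝ) (c : ℝ)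
    (hA : ∀ D ∈ stdSimplex ℝ α, ∃ j, c ≤ (D ᵥ* A) j) :
    ∃ Q ∈ stdSimplex ℝ ι, ∀ i, c ≤ (A *ᵥ Q) i := by
  cases isEmpty_or_nonempty α
  · obtain ⟨Q, hQ⟩ := (isPathConnected_stdSimplex ι).nonempty
    exact ⟨Q, hQ, isEmptyElim⟩
  obtain ⟨D, hD, Q, hQ, hsaddle⟩ := A.exists_isSaddlePointOn_stdSimplex
  obtain ⟨j, hj⟩ := hA D hD
  refine ⟨Q, hQ, fun i => ?_⟩
  calc c ≤ (D ᵥ* A) j := hj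
    _ = D ⬝ᵥ (A *ᵥ Pi.single j 1) := by
      rw [dotProduct_mulVec, dotProduct_single, mul_one]
    _ ≤ Pi.single i 1 ⬝ᵥ (A *ᵥ Q) :=
      hsaddle _ (single_mem_stdSimplex ℝ i) _ (single_mem_stdSimplex ℝ j)
    _ = (A *ᵥ Q) i := by rw [single_dotProduct, one_mul]

end Minimax

section RobustCorrectness

variable {α ι X Y : Type*} [Add X] (B : Set X) (h : ι → X → Y) (x : α → X) (y : α → Y)

noncomputable def robustCorrectMatrix : Matrix α ι ℝ :=
  Matrix.of fun i j => if ∀ z ∈ B, h j (x i + z) = y i then 1 else 0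

theorem robustError_indicator_eq (i : α) (j : ι) :
    (if ∃ z ∈ B, h j (x i + z) ≠ y i then (1 : ℝ) else 0) =
      1 - robustCorrectMatrix B h x y i j := by
  simp only [robustCorrectMatrix, of_apply]
  split_ifs <;> grind

theorem le_vecMul_robustCorrectMatrix [Fintype α] {γ : ℝ} {D : α → ℝ} (hD : ∑ i, D i = 1) {j : ι}
    (hj : ∑ i, D i * (2 * (if ∃ z ∈ B, h j (x i + z) ≠ y i then (1 : ℝ) else 0) - 1) ≤ -γ) :
    (1 + γ) / 2 ≤ (D ᵥ* robustCorrectMatrix B h x y) j := by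
  have hedge : ∑ i, D i * (2 * (if ∃ z ∈ B, h j (x i + z) ≠ y i then (1 : ℝ) else 0) - 1)
      = 1 - 2 * (D ᵥ* robustCorrectMatrix B h x y) j := by
    simp_rw [robustError_indicator_eq]
    calc ∑ i, D i * (2 * (1 - robustCorrectMatrix B h x y i j) - 1)
        = ∑ i, D i - 2 * ∑ i, D i * robustCorrectMatrix B h x y i j := by
          rw [Finset.mul_sum, ← Finset.sum_sub_distrib]
          exact Finset.sum_congr rfl fun i _ => by ring
      _ = 1 - 2 * (D ᵥ* robustCorrectMatrix B h x y) j := by rw [hD]; rfl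
  linarith

theorem mulVec_robustCorrectMatrix_le [Fintype ι] [DecidableEq Y] {Q : ι → ℝ} (hQ : ∀ j, 0 ≤ Q j)
    (i : α) {z : X} (hz : z ∈ B) :
    (robustCorrectMatrix B h x y *ᵥ Q) i ≤ ∑ j, Q j * (if h j (x i + z) = y i then 1 else 0) := by
  refine Finset.sum_le_sum fun j _ => ?_
  rw [mul_comm]
  refine mul_le_mul_of_nonneg_left ?_ (hQ j)
  simp only [robustCorrectMatrix, of_apply]
  split_ifs <;> grind

end RobustCorrectness

theorem robust_ova_boosting_general
    (d k m : ℕ) (p δ : ℝ)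
    (ι : Type) [Fintype ι] [Nonempty ι]
    (h : ι → (Fin d → ℝ) → Fin k)
    (x : Fin m → Fin d → ℝ) (ylab : Fin m → Fin k)
    (γ : ℝ)
    (hweak : ∀ D : Fin m → ℝ, (∀ i, 0 ≤ D i) → (∑ i, D i = 1) →
      ∃ j : ι,
        (∑ i, D i * (2 * (if (∃ z ∈ Bp d p δ, h j (x i + z) ≠ ylab i) then (1:ℝ) else 0) - 1)) ≤ -γ) :
    ∃ Q : ι → ℝ, (∀ j, 0 ≤ Q j) ∧ (∑ j, Q j = 1) ∧
      ∀ i : Fin m, ∀ z ∈ Bp d p δ,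
        (1 + γ) / 2 ≤ ∑ j, Q j * (if h j (x i + z) = ylab i then (1:ℝ) else 0) := by
  obtain ⟨Q, ⟨hQ0, hQ1⟩, hQ⟩ :=
    (robustCorrectMatrix (Bp d p δ) h x ylab).exists_mem_stdSimplex_le_mulVec ((1 + γ) / 2)
      fun D ⟨hD0, hD1⟩ => (hweak D hD0 hD1).imp fun _ => le_vecMul_robustCorrectMatrix _ _ _ _ hD1
  exact ⟨Q, hQ0, hQ1, fun i z hz =>
    (hQ i).trans (mulVec_robustCorrectMatrix_le _ _ _ _ hQ0 i hz)⟩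

/-- robust one-vs-all boosting. -/
theorem robust_ova_boosting
    (d k m : ℕ) (hm : 1 ≤ m) (p δ : ℝ) (hp : 1 ≤ p) (hδ : 0 ≤ δ)
    (ι : Type) [Fintype ι] [Nonempty ι]
    (h : ι → (Fin d → ℝ) → Fin k)
    (x : Fin m → Fin d → ℝ) (ylab : Fin m → Fin k)
    (γ : ℝ) (hγ : 0 < γ)
    (hweak : ∀ D : Fin m → ℝ, (∀ i, 0 ≤ D i) → (∑ i, D i = 1) →
      ∃ j : ι,
        (∑ i, D i * (2 * (if (∃ z ∈ Bp d p δ, h j (x i + z) ≠ ylab i) then (1:ℝ) else 0) - 1)) ≤ -γ) :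
    ∃ Q : ι → ℝ, (∀ j, 0 ≤ Q j) ∧ (∑ j, Q j = 1) ∧
      ∀ i : Fin m, ∀ z ∈ Bp d p δ,
        (1 + γ) / 2 ≤ ∑ j, Q j * (if h j (x i + z) = ylab i then (1:ℝ) else 0) :=
  robust_ova_boosting_general d k m p δ ι h x ylab γ hweak
end

section
/- Let $H$ be a finite class of predictors with radius guarantees: each $h\in H$ is a pair $(h_L,h_R)$ with $h_L:\mathbb{R}^d\to[k]$ and $h_R:\mathbb{R}^d\to\mathbb{R}_{\geq 0}$ satisfying the soundness property that for all $x$ and all $z$ with $\|z\|_2\leq h_R(x)$, $h_L(x+z)=h_L(x)$. Define certified accuracy $\mathrm{acc}_\delta(h,D)=\Pr_{(x,y)\sim D}[h_L(x)=y \wedge h_R(x)\geq\delta]$. Suppose $\delta^*\geq 0$ and $\gamma>0$ are such that for every distribution $D$ over the finite training set $S$ there exists $h\in H$ with $\mathrm{acc}_{\delta^*}(h,D)\geq\frac12+\frac{\gamma}{2}$. Then there exists a probability distribution $Q$ over $H$ such that for all $(x,y)\in S$ and all $z$ with $\|z\|_2\leq\delta^*$, $\Pr_{h\sim Q}[h_L(x+z)=y]\geq\frac{1+\gamma}{2}$;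 in particular the plurality-vote classifier over $(h_L)_{h\sim Q}$ predicts $y$ on every such perturbed input. -/
open scoped Classical

/-! Against every distribution on the sample some predictor has certified accuracy at least
`(1 + γ) / 2`, so by von Neumann's minimax theorem (a saddle point of the bilinear payoff on the
product of the two simplices, obtained from Sion's theorem) some mixture `Q` of predictors has
certified accuracy at least `(1 + γ) / 2` at every single sample point. Soundness of the radii
turns certified correctness at `x` into correctness at every `x + z` with `‖z‖ ≤ δ*`, so `Q` puts
more than half of its mass on the true label there, which makes that label the strict plurality. -/

theorem LinearMap.exists_isSaddlePointOn {E F : Type*}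
    [AddCommGroup E] [Module ℝ E] [TopologicalSpace E] [IsTopologicalAddGroup E]
    [ContinuousSMul ℝ E] [T2Space E] [FiniteDimensional ℝ E]
    [AddCommGroup F] [Module ℝ F] [TopologicalSpace F] [IsTopologicalAddGroup F]
    [ContinuousSMul ℝ F] [T2Space F] [FiniteDimensional ℝ F]
    (B : E →ₗ[ℝ] F →ₗ[ℝ] ℝ) {X : Set E} {Y : Set F}
    (neX : X.Nonempty) (cX : Convex ℝ X) (kX : IsCompact X)
    (neY : Y.Nonempty) (cY : Convex ℝ Y) (kY : IsCompact Y) :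
    ∃ a ∈ X, ∃ b ∈ Y, IsSaddlePointOn X Y (fun x y ↦ B x y) a b :=
  Sion.exists_isSaddlePointOn neX cX kX
    (fun y _ ↦
      (B.flip y).continuous_of_finiteDimensional.lowerSemicontinuous.lowerSemicontinuousOn X)
    (fun y _ ↦ ((B.flip y).convexOn cX).quasiconvexOn) cY neY kY
    (fun x _ ↦ (B x).continuous_of_finiteDimensional.upperSemicontinuous.upperSemicontinuousOn Y)
    (fun x _ ↦ ((B x).concaveOn cY).quasiconcaveOn)

namespace Matrix

theorem exists_mem_stdSimplex_forall_le_sum_mul {ι κ : Type*} [Fintype ι] [Fintype κ]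
    [Nonempty κ] (A : Matrix ι κ ℝ) {c : ℝ}
    (h : ∀ D ∈ stdSimplex ℝ κ, ∃ j, c ≤ ∑ i, D i * A j i) :
    ∃ Q ∈ stdSimplex ℝ ι, ∀ i, c ≤ ∑ j, Q j * A j i := by
  obtain ⟨i₀⟩ := ‹Nonempty κ›
  obtain ⟨j₀, -⟩ := h _ (single_mem_stdSimplex ℝ i₀)
  let B : (κ → ℝ) →ₗ[ℝ] (ι → ℝ) →ₗ[ℝ] ℝ := (toLinearMap₂' ℝ A).flip
  have hB : ∀ D Q, B D Q = ∑ j, ∑ i, Q j * D i * A j i := fun D Q ↦ by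
    simp [B, toLinearMap₂'_apply, mul_assoc]
  obtain ⟨D, hD, Q, hQ, hsaddle⟩ := B.exists_isSaddlePointOn
    ⟨_, single_mem_stdSimplex ℝ i₀⟩ (convex_stdSimplex ℝ κ) (isCompact_stdSimplex ℝ κ)
    ⟨_, single_mem_stdSimplex ℝ j₀⟩ (convex_stdSimplex ℝ ι) (isCompact_stdSimplex ℝ ι)
  refine ⟨Q, hQ, fun i ↦ ?_⟩
  obtain ⟨j, hj⟩ := h D hD
  calc c ≤ ∑ i, D i * A j i := hj
    _ = B D (Pi.single j 1) := by simp [hB, Pi.single_apply]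
    _ ≤ B (Pi.single i 1) Q :=
      hsaddle _ (single_mem_stdSimplex ℝ i) _ (single_mem_stdSimplex ℝ j)
    _ = ∑ j, Q j * A j i := by simp [hB, Pi.single_apply]

end Matrix

section Vote

variable {ι α : Type*} [Fintype ι] [DecidableEq α]

def voteShare (Q : ι → ℝ) (g : ι → α) (y : α) : ℝ :=
  ∑ j, Q j * if g j = y then 1 else 0

theorem voteShare_add_voteShare_le_one {Q : ι → ℝ} (hQ : Q ∈ stdSimplex ℝ ι) (g : ι → α)
    {y y' : α} (hy : y' ≠ y) : voteShare Q g y' + voteShare Q g y ≤ 1 := by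
  calc voteShare Q g y' + voteShare Q g y
      = ∑ j, Q j * ((if g j = y' then 1 else 0) + if g j = y then 1 else 0) := by
        simp only [voteShare, ← Finset.sum_add_distrib, mul_add]
    _ ≤ ∑ j, Q j := Finset.sum_le_sum fun j _ ↦ mul_le_of_le_one_right (hQ.1 j) <| by
        split_ifs <;> simp_all
    _ = 1 := hQ.2

theorem voteShare_lt_voteShare_of_half_lt {Q : ι → ℝ} (hQ : Q ∈ stdSimplex ℝ ι) {g : ι → α}
    {y y' : α} (hmaj : 1 / 2 < voteShare Q g y) (hy : y' ≠ y) :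
    voteShare Q g y' < voteShare Q g y := by
  linarith [voteShare_add_voteShare_le_one hQ g hy]

theorem sum_certified_le_voteShare_add {E : Type*} [SeminormedAddGroup E] {Q : ι → ℝ}
    (hQ : ∀ j, 0 ≤ Q j) {f : ι → E → α} {r : ι → E → ℝ}
    (hsound : ∀ j x z, ‖z‖ ≤ r j x → f j (x + z) = f j x) {δ : ℝ} (x : E) {z : E}
    (hz : ‖z‖ ≤ δ) (y : α) :
    ∑ j, Q j * (if f j x = y ∧ δ ≤ r j x then (1 : ℝ) else 0) ≤
      voteShare Q (fun j ↦ f j (x + z)) y := by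
  refine Finset.sum_le_sum fun j _ ↦ mul_le_mul_of_nonneg_left ?_ (hQ j)
  have hrobust : f j x = y ∧ δ ≤ r j x → f j (x + z) = y := fun hcert ↦
    (hsound j x z (hz.trans hcert.2)).trans hcert.1
  split_ifs <;> simp_all

end Vote

theorem certified_boosting_general
    (d k m : ℕ) (hm : 1 ≤ m)
    (ι : Type) [Fintype ι]
    (hL : ι → EuclideanSpace ℝ (Fin d) → Fin k)
    (hR : ι → EuclideanSpace ℝ (Fin d) → ℝ)
    -- soundness of the radius guarantee
    (hsound : ∀ j : ι, ∀ x z : EuclideanSpace ℝ (Fin d), ‖z‖ ≤ hR j x → hL j (x + z) = hL j x)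
    (x : Fin m → EuclideanSpace ℝ (Fin d)) (ylab : Fin m → Fin k)
    (δstar γ : ℝ) (hγ : 0 < γ)
    -- weak learning in certified accuracy: for every D over S some h has acc_{δ*}(h, D) ≥ 1/2 + γ/2
    (hweak : ∀ D : Fin m → ℝ, (∀ i, 0 ≤ D i) → (∑ i, D i = 1) →
      ∃ j : ι, (1 / 2 + γ / 2 : ℝ) ≤
        ∑ i, D i * (if hL j (x i) = ylab i ∧ δstar ≤ hR j (x i) then (1:ℝ) else 0)) :
    ∃ Q : ι → ℝ, (∀ j, 0 ≤ Q j) ∧ (∑ j, Q j = 1) ∧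
      ∀ i : Fin m, ∀ z : EuclideanSpace ℝ (Fin d), ‖z‖ ≤ δstar →
        ((1 + γ) / 2 ≤ ∑ j, Q j * (if hL j (x i + z) = ylab i then (1:ℝ) else 0)) ∧
        (∀ y' : Fin k, y' ≠ ylab i →
          (∑ j, Q j * (if hL j (x i + z) = y' then (1:ℝ) else 0)) <
          (∑ j, Q j * (if hL j (x i + z) = ylab i then (1:ℝ) else 0))) := by
  have : Nonempty (Fin m) := ⟨⟨0, hm⟩⟩
  obtain ⟨Q, hQ, hcert⟩ := Matrix.exists_mem_stdSimplex_forall_le_sum_mul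
    (Matrix.of fun j i ↦ if hL j (x i) = ylab i ∧ δstar ≤ hR j (x i) then (1 : ℝ) else 0)
    fun D hD ↦ hweak D hD.1 hD.2
  refine ⟨Q, hQ.1, hQ.2, fun i z hz ↦ ?_⟩
  have hmaj : (1 + γ) / 2 ≤ voteShare Q (fun j ↦ hL j (x i + z)) (ylab i) :=
    calc (1 + γ) / 2 = 1 / 2 + γ / 2 := by ring
      _ ≤ _ := hcert i
      _ ≤ _ := sum_certified_le_voteShare_add hQ.1 hsound (x i) hz (ylab i)
  exact ⟨hmaj, fun y' hy' ↦ voteShare_lt_voteShare_of_half_lt hQ (by linarith) hy'⟩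

/-- boosting with certified (radius-guarantee) predictors. `ι` indexes the
finite class `H` of predictors `(hL j, hR j)` with sound ℓ₂-radius guarantees. -/
theorem certified_boosting
    (d k m : ℕ) (hm : 1 ≤ m)
    (ι : Type) [Fintype ι] [Nonempty ι]
    (hL : ι → EuclideanSpace ℝ (Fin d) → Fin k)
    (hR : ι → EuclideanSpace ℝ (Fin d) → ℝ)
    (hRnn : ∀ j x, 0 ≤ hR j x)
    -- soundness of the radius guarantee
    (hsound : ∀ j : ι, ∀ x z : EuclideanSpace ℝ (Fin d), ‖z‖ ≤ hR j x → hL j (x + z) = hL j x)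
    (x : Fin m → EuclideanSpace ℝ (Fin d)) (ylab : Fin m → Fin k)
    (δstar γ : ℝ) (hδ : 0 ≤ δstar) (hγ : 0 < γ)
    -- weak learning in certified accuracy: for every D over S some h has acc_{δ*}(h, D) ≥ 1/2 + γ/2
    (hweak : ∀ D : Fin m → ℝ, (∀ i, 0 ≤ D i) → (∑ i, D i = 1) →
      ∃ j : ι, (1 / 2 + γ / 2 : ℝ) ≤
        ∑ i, D i * (if hL j (x i) = ylab i ∧ δstar ≤ hR j (x i) then (1:ℝ) else 0)) :
    ∃ Q : ι → ℝ, (∀ j, 0 ≤ Q j) ∧ (∑ j, Q j = 1) ∧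
      ∀ i : Fin m, ∀ z : EuclideanSpace ℝ (Fin d), ‖z‖ ≤ δstar →
        ((1 + γ) / 2 ≤ ∑ j, Q j * (if hL j (x i + z) = ylab i then (1:ℝ) else 0)) ∧
        (∀ y' : Fin k, y' ≠ ylab i →
          (∑ j, Q j * (if hL j (x i + z) = y' then (1:ℝ) else 0)) <
          (∑ j, Q j * (if hL j (x i + z) = ylab i then (1:ℝ) else 0))) :=
  certified_boosting_general d k m hm ι hL hR hsound x ylab δstar γ hγ hweak
end

section
/- (Ensemble radius certificate.) Let $h_1,\dots,h_N:\mathbb{R}^d\to[k]$ be unilabel predictors with nonnegative weights $q_1,\dots,q_N$ summing to 1, and suppose each $h_i$ comes with a radius $r_i\geq 0$ at a point $x$ such that $h_i(x+z)=h_i(x)$ for all $\|z\|_2\leq r_i$. Order them so that $r_1\leq r_2\leq\cdots\leq r_N$. Let $y$ denote the plurality vote at $x$ and, for an index $i^*$, define $g^{(i^*)}(x)_c = \sum_{j\geq i^*} q_j\,\mathbb{1}[h_j(x)=c]$. If $\sum_{i<i^*} q_i + \max_{y'\neq y} g^{(i^*)}(x)_{y'} \leq g^{(i^*)}(x)_y$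 with the inequality strict, then for every $z$ with $\|z\|_2\leq r_{i^*}$, the weighted plurality vote of $h_1,\dots,h_N$ at $x+z$ is still $y$ (strictly): $\sum_j q_j\,\mathbb{1}[h_j(x+z)=y] > \sum_j q_j\,\mathbb{1}[h_j(x+z)=y']$ for every $y'\neq y$. -/
open Finset

/-- With `s = {j | i* ≤ j}` and `f = (h · x)` this is the paper's `g^{(i*)}(x)_c`. -/
def weightedVote {ι κ : Type*} [DecidableEq κ] (q : ι → ℝ) (f : ι → κ) (s : Finset ι) (c : κ) : ℝ :=
  ∑ j ∈ s, q j * if f j = c then 1 else 0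

section WeightedVote

variable {ι κ : Type*} [DecidableEq κ] {q : ι → ℝ} {f g : ι → κ} {s : Finset ι} {c : κ}

lemma weightedVote_nonneg (hq : ∀ j, 0 ≤ q j) : 0 ≤ weightedVote q f s c :=
  sum_nonneg fun j _ => mul_nonneg (hq j) (by split_ifs <;> norm_num)

lemma weightedVote_le_sum (hq : ∀ j, 0 ≤ q j) : weightedVote q f s c ≤ ∑ j ∈ s, q j :=
  sum_le_sum fun j _ => mul_le_of_le_one_right (hq j) (by split_ifs <;> norm_num)

lemma weightedVote_congr (hfg : ∀ j ∈ s, f j = g j) : weightedVote q f s c = weightedVote q g s c :=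
  sum_congr rfl fun j hj => by rw [hfg j hj]

lemma weightedVote_add_compl [Fintype ι] [DecidableEq ι] :
    weightedVote q f sᶜ c + weightedVote q f s c = weightedVote q f univ c :=
  sum_compl_add_sum s _

/-- Voters outside `s` can move the margin between `y` and `y'` by at most their total weight. -/
lemma weightedVote_lt_of_eqOn [Fintype ι] [DecidableEq ι] (hq : ∀ j, 0 ≤ q j)
    (hfg : ∀ j ∈ s, f j = g j) {y y' : κ}
    (hmargin : ∑ j ∈ sᶜ, q j + weightedVote q g s y' < weightedVote q g s y) :
    weightedVote q f univ y' < weightedVote q f univ y := by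
  rw [← weightedVote_add_compl (s := s), ← weightedVote_add_compl (s := s),
    weightedVote_congr hfg, weightedVote_congr hfg]
  have hout : weightedVote q f sᶜ y' ≤ ∑ j ∈ sᶜ, q j := weightedVote_le_sum hq
  have hin : 0 ≤ weightedVote q f sᶜ y := weightedVote_nonneg hq
  linarith

end WeightedVote

theorem ensemble_radius_certificate_general
    (d k N : ℕ)
    (h : Fin N → EuclideanSpace ℝ (Fin d) → Fin k)
    (q : Fin N → ℝ) (hq0 : ∀ j, 0 ≤ q j)
    (r : Fin N → ℝ)
    (hmono : ∀ j j' : Fin N, j ≤ j' → r j ≤ r j')   -- r₁ ≤ r₂ ≤ ⋯ ≤ r_N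
    (x : EuclideanSpace ℝ (Fin d))
    (hrad : ∀ j : Fin N, ∀ z : EuclideanSpace ℝ (Fin d), ‖z‖ ≤ r j → h j (x + z) = h j x)
    (y : Fin k) (istar : Fin N)
    -- certificate inequality (strict)
    (hcert : ∀ y' : Fin k, y' ≠ y →
      (∑ j ∈ Finset.univ.filter (fun j => j < istar), q j)
        + (∑ j ∈ Finset.univ.filter (fun j => istar ≤ j), q j * (if h j x = y' then (1:ℝ) else 0))
      < ∑ j ∈ Finset.univ.filter (fun j => istar ≤ j), q j * (if h j x = y then (1:ℝ) else 0)) :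
    ∀ z : EuclideanSpace ℝ (Fin d), ‖z‖ ≤ r istar →
      ∀ y' : Fin k, y' ≠ y →
        (∑ j, q j * (if h j (x + z) = y' then (1:ℝ) else 0)) <
        (∑ j, q j * (if h j (x + z) = y then (1:ℝ) else 0)) := by
  intro z hz y' hy'
  have htail : ∀ j ∈ univ.filter (istar ≤ ·), h j (x + z) = h j x := fun j hj =>
    hrad j z (hz.trans (hmono istar j (mem_filter.1 hj).2))
  refine weightedVote_lt_of_eqOn (y := y) (y' := y') hq0 htail ?_
  rw [compl_filter]
  simpa only [not_le, weightedVote] using hcert y' hy'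

/-- ensemble radius certificate. If the high-radius tail of the ensemble
already outvotes every other label by more than the total weight of the low-radius head,
then the weighted plurality vote is stable under all perturbations of ℓ₂ norm ≤ r_{i*}. -/
theorem ensemble_radius_certificate
    (d k N : ℕ)
    (h : Fin N → EuclideanSpace ℝ (Fin d) → Fin k)
    (q : Fin N → ℝ) (hq0 : ∀ j, 0 ≤ q j) (hq1 : ∑ j, q j = 1)
    (r : Fin N → ℝ) (hr0 : ∀ j, 0 ≤ r j)
    (hmono : ∀ j j' : Fin N, j ≤ j' → r j ≤ r j')   -- r₁ ≤ r₂ ≤ ⋯ ≤ r_N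
    (x : EuclideanSpace ℝ (Fin d))
    (hrad : ∀ j : Fin N, ∀ z : EuclideanSpace ℝ (Fin d), ‖z‖ ≤ r j → h j (x + z) = h j x)
    (y : Fin k) (istar : Fin N)
    -- certificate inequality (strict)
    (hcert : ∀ y' : Fin k, y' ≠ y →
      (∑ j ∈ Finset.univ.filter (fun j => j < istar), q j)
        + (∑ j ∈ Finset.univ.filter (fun j => istar ≤ j), q j * (if h j x = y' then (1:ℝ) else 0))
      < ∑ j ∈ Finset.univ.filter (fun j => istar ≤ j), q j * (if h j x = y then (1:ℝ) else 0)) :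
    ∀ z : EuclideanSpace ℝ (Fin d), ‖z‖ ≤ r istar →
      ∀ y' : Fin k, y' ≠ y →
        (∑ j, q j * (if h j (x + z) = y' then (1:ℝ) else 0)) <
        (∑ j, q j * (if h j (x + z) = y then (1:ℝ) else 0)) :=
  ensemble_radius_certificate_general d k N h q hq0 r hmono x hrad y istar hcert
end
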